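/- Multicomponent construction lower bound: For positive integers k, n with n > 2k and k not dividing n, A_q(n,2k;k) ≥ (q^n − q^{k+(n mod k)} + q^k − 1)/(q^k − 1); equivalently there is a partial k-spread of this size, namely 1 + Σ_{i=1}^{⌊n/k⌋−1} q^{n−ik}. -/

import Mathlib

open Module

/-- The subspace distance between two subspaces. -/
noncomputable def dS {K V : Type*} [Field K] [AddCommGroup V] [Module K V]
    (U W : Submodule K V) : ℕ :=
  finrank K ↥(U ⊔ W) - finrank K ↥(U ⊓ W)

/-- The injection distance between two subspaces. -/
noncomputable def dI {K V : Type*} [Field K] [AddCommGroup V] [Module K V]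
    (U W : Submodule K V) : ℕ :=
  max (finrank K ↥U) (finrank K ↥W) - finrank K ↥(U ⊓ W)

/-- `Acdc K V d k` is the maximum cardinality of a set of `k`-dimensional subspaces of `V`
with pairwise subspace distance at least `d` (a constant dimension code). -/
noncomputable def Acdc (K V : Type*) [Field K] [AddCommGroup V] [Module K V]
    (d k : ℕ) : ℕ :=
  sSup { m | ∃ C : Finset (Submodule K V),
    (∀ U ∈ C, finrank K ↥U = k) ∧
    (∀ U ∈ C, ∀ W ∈ C, U ≠ W → d ≤ dS U W) ∧ C.card = m }

/-!
Write `n = k + d` with `k ≤ d` and identify `𝔽_q^n` with `S × 𝔽_{q^d}` for a `k`-dimensional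
`𝔽_q`-subspace `S` of `𝔽_{q^d}`. The graphs of `x ↦ a * x` on `S`, for `a ∈ 𝔽_{q^d}`, are `q^d`
pairwise trivially intersecting `k`-spaces, all meeting `0 × 𝔽_{q^d}` trivially. Recursing inside
that `d`-dimensional space until the dimension drops below `2k` (where a single `k`-space is taken)
gives a partial spread of size `q^(n-k) + q^(n-2k) + ⋯ + 1`, and multiplying this sum by `q^k - 1`
telescopes to the closed form.
-/

open Function

def multicomponentSize (q k m : ℕ) : ℕ :=
  1 + ∑ i ∈ Finset.Icc 1 (m / k - 1), q ^ (m - i * k)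

section MulticomponentSize

variable {q k m : ℕ}

theorem multicomponentSize_of_lt_two_mul (h : m < 2 * k) : multicomponentSize q k m = 1 := by
  have : m / k - 1 = 0 := by
    have := Nat.div_lt_of_lt_mul (by rwa [mul_comm] at h)
    omega
  simp [multicomponentSize, this]

theorem multicomponentSize_eq_pow_add (hk : k ≠ 0) (h : 2 * k ≤ m) :
    multicomponentSize q k m = q ^ (m - k) + multicomponentSize q k (m - k) := by
  have hdiv : m / k = (m - k) / k + 1 := Nat.div_eq_sub_div (by omega) (by omega)
  have hpos : 1 ≤ (m - k) / k := (Nat.le_div_iff_mul_le (by omega)).2 (by omega)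
  obtain ⟨N, hN⟩ : ∃ N, (m - k) / k = N + 1 := ⟨_, (Nat.sub_add_cancel hpos).symm⟩
  simp only [multicomponentSize, hdiv, hN, Nat.add_sub_cancel, ← Finset.Ico_add_one_right_eq_Icc,
    Finset.sum_Ico_eq_sum_range, Finset.sum_range_succ']
  have hexp : ∀ j, m - (1 + (j + 1)) * k = m - k - (1 + j) * k := fun j => by
    rw [Nat.sub_sub]; ring_nf
  simp only [hexp, add_zero, one_mul]
  omega

theorem multicomponentSize_mul_pow_sub_one (hk : k ≠ 0) (hkm : k ≤ m) :
    (multicomponentSize q k m : ℤ) * (q ^ k - 1) = q ^ m - q ^ (k + m % k) + q ^ k - 1 := by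
  induction m using Nat.strong_induction_on with
  | _ m ih =>
  rcases lt_or_ge m (2 * k) with h | h
  · have : k + m % k = m := by
      rw [Nat.mod_eq_sub_mod hkm, Nat.mod_eq_of_lt (by omega)]; omega
    rw [multicomponentSize_of_lt_two_mul h, this]; ring
  · have hpow : (q : ℤ) ^ m = q ^ (m - k) * q ^ k := by rw [← pow_add, Nat.sub_add_cancel hkm]
    rw [multicomponentSize_eq_pow_add hk h, Nat.mod_eq_sub_mod hkm, hpow]
    push_cast
    linear_combination ih (m - k) (by omega) (by omega)

theorem multicomponentSize_eq_div (hq : 2 ≤ q) (hk : k ≠ 0) (hkm : k ≤ m) :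
    (q ^ m - q ^ (k + m % k) + q ^ k - 1) / (q ^ k - 1) = multicomponentSize q k m := by
  have h1 : 2 ≤ q ^ k := (Nat.le_self_pow hk q).trans' hq
  have h2 : q ^ (k + m % k) ≤ q ^ m := by
    refine Nat.pow_le_pow_right (by omega) ?_
    rw [Nat.mod_eq_sub_mod hkm]
    have := Nat.mod_le (m - k) k
    omega
  refine Nat.div_eq_of_eq_mul_left (by omega) ?_
  zify [h2, (by omega : 1 ≤ q ^ k), (by omega : 1 ≤ q ^ m - q ^ (k + m % k) + q ^ k)]
  rw [multicomponentSize_mul_pow_sub_one hk hkm]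

end MulticomponentSize

theorem dS_eq_finrank_add_of_disjoint {K V : Type*} [Field K] [AddCommGroup V] [Module K V]
    {U W : Submodule K V} [FiniteDimensional K U] [FiniteDimensional K W] (h : Disjoint U W) :
    dS U W = finrank K U + finrank K W := by
  have := Submodule.finrank_sup_add_finrank_inf_eq U W
  rw [h.eq_bot, finrank_bot] at this
  rw [dS, h.eq_bot, finrank_bot]
  omega

theorem exists_submodule_finrank_eq {K V : Type*} [DivisionRing K] [AddCommGroup V] [Module K V]
    {k : ℕ} (hk : k ≤ finrank K V) : ∃ U : Submodule K V, finrank K U = k := by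
  obtain ⟨s, hcard, hind⟩ := exists_finset_linearIndependent_of_le_finrank hk
  exact ⟨Submodule.span K s, by rw [finrank_span_finset_eq_card hind, hcard]⟩

namespace LinearMap

variable {R M N : Type*} [Ring R] [AddCommGroup M] [AddCommGroup N] [Module R M] [Module R N]

theorem disjoint_graph_graph {f g : M →ₗ[R] N} (h : Injective (f - g)) :
    Disjoint f.graph g.graph := by
  refine Submodule.disjoint_def.2 fun ⟨x, y⟩ hf hg => ?_
  rw [mem_graph_iff] at hf hg
  obtain rfl : x = 0 := h <| by rw [map_zero, sub_apply, ← hf, ← hg, sub_self]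
  simpa using hf

theorem disjoint_graph_range_inr (f : M →ₗ[R] N) : Disjoint f.graph (range (inr R M N)) := by
  refine Submodule.disjoint_def.2 fun ⟨x, y⟩ hf ⟨z, hz⟩ => ?_
  obtain ⟨rfl, rfl⟩ := Prod.ext_iff.1 hz
  simpa using hf

theorem finrank_graph (f : M →ₗ[R] N) : finrank R f.graph = finrank R M := by
  rw [graph_eq_range_prod, finrank_range_of_inj fun x y hxy => congrArg Prod.fst hxy]

end LinearMap

section PartialSpread

variable {K V V' : Type*} [Field K] [AddCommGroup V] [Module K V] [AddCommGroup V'] [Module K V']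

def IsPartialSpread (k : ℕ) (C : Finset (Submodule K V)) : Prop :=
  (∀ U ∈ C, finrank K U = k) ∧ (C : Set (Submodule K V)).Pairwise Disjoint

namespace IsPartialSpread

variable {k : ℕ} {C D : Finset (Submodule K V)}

theorem singleton {U : Submodule K V} (hU : finrank K U = k) : IsPartialSpread k {U} :=
  ⟨by simpa using hU, by simp⟩

theorem image_map (hC : IsPartialSpread k C) {f : V →ₗ[K] V'} (hf : Injective f) :
    IsPartialSpread k (C.image (Submodule.map f)) := by
  refine ⟨?_, ?_⟩
  · simp only [Finset.mem_image, forall_exists_index, and_imp, forall_apply_eq_imp_iff₂]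
    intro U hU
    rw [← hC.1 U hU]
    exact (Submodule.equivMapOfInjective f hf U).finrank_eq.symm
  · simp only [Finset.coe_image]
    rintro _ ⟨U, hU, rfl⟩ _ ⟨W, hW, rfl⟩ hne
    exact Submodule.disjoint_map hf (hC.2 hU hW fun h => hne (h ▸ rfl))

theorem union (hC : IsPartialSpread k C) (hD : IsPartialSpread k D)
    (hCD : ∀ U ∈ C, ∀ W ∈ D, Disjoint U W) : IsPartialSpread k (C ∪ D) := by
  refine ⟨fun U hU => (Finset.mem_union.1 hU).elim (hC.1 U) (hD.1 U), ?_⟩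
  rw [Finset.coe_union, Set.pairwise_union_of_symm]
  exact ⟨hC.2, hD.2, fun U hU W hW _ => hCD U hU W hW⟩

theorem card_union (hk : k ≠ 0) (hC : IsPartialSpread k C)
    (hCD : ∀ U ∈ C, ∀ W ∈ D, Disjoint U W) : (C ∪ D).card = C.card + D.card := by
  refine Finset.card_union_of_disjoint (Finset.disjoint_left.2 fun U hUC hUD => hk ?_)
  rw [← hC.1 U hUC, disjoint_self.1 (hCD U hUC U hUD), finrank_bot]

theorem card_le_Acdc [Finite V] (hC : IsPartialSpread k C) : C.card ≤ Acdc K V (2 * k) k := by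
  have := Fintype.ofFinite (Submodule K V)
  refine le_csSup ⟨Fintype.card (Submodule K V), ?_⟩ ⟨C, hC.1, fun U hU W hW hUW => ?_, rfl⟩
  · rintro _ ⟨D, -, -, rfl⟩
    exact Finset.card_le_univ D
  · rw [dS_eq_finrank_add_of_disjoint (hC.2 hU hW hUW), hC.1 U hU, hC.1 W hW, two_mul]

end IsPartialSpread

theorem isPartialSpread_image {ι : Type*} {k : ℕ} {G : ι → Submodule K V}
    (hG : ∀ i, finrank K (G i) = k) (hdisj : Pairwise (Disjoint on G)) (s : Finset ι) : IsPartialSpread k (s.image G) := by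
  refine ⟨by simpa using fun i _ => hG i, ?_⟩
  rw [Finset.coe_image]
  rintro _ ⟨i, -, rfl⟩ _ ⟨j, -, rfl⟩ hne
  exact hdisj fun h => hne (h ▸ rfl)

end PartialSpread

section MulGraph

variable {K L : Type*} [Field K] [Field L] [Algebra K L] (S : Submodule K L)

def mulGraph (a : L) : Submodule K (S × L) :=
  ((LinearMap.mulLeft K a).comp S.subtype).graph

theorem pairwise_disjoint_mulGraph : Pairwise (Disjoint on mulGraph S) := by
  intro a b hab
  refine LinearMap.disjoint_graph_graph ?_
  have : (LinearMap.mulLeft K a).comp S.subtype - (LinearMap.mulLeft K b).comp S.subtype =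
      (LinearMap.mulLeft K (a - b)).comp S.subtype := by
    ext; simp [sub_mul]
  rw [this]
  exact (mul_right_injective₀ (sub_ne_zero.2 hab)).comp S.injective_subtype

theorem injective_mulGraph (hS : S ≠ ⊥) : Injective (mulGraph S) := by
  intro a b hab
  by_contra hne
  obtain ⟨x, hxS, hx⟩ := Submodule.exists_mem_ne_zero_of_ne_bot hS
  have hbot : mulGraph S a = ⊥ := by
    have h := pairwise_disjoint_mulGraph S hne
    rwa [onFun, ← hab, disjoint_self] at h
  have hmem : ((⟨x, hxS⟩ : S), a * x) ∈ mulGraph S a := rfl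
  rw [hbot, Submodule.mem_bot, Prod.mk_eq_zero] at hmem
  exact hx (congrArg Subtype.val hmem.1)

end MulGraph

theorem exists_isPartialSpread_disjoint_of_finrank_eq_add {K V : Type*} [Field K] [Fintype K]
    [AddCommGroup V] [Module K V] {k d : ℕ} (hk : k ≠ 0) (hkd : k ≤ d) (hV : finrank K V = k + d) :
    ∃ (C : Finset (Submodule K V)) (W : Submodule K V), IsPartialSpread k C ∧
      C.card = Fintype.card K ^ d ∧ finrank K W = d ∧ ∀ U ∈ C, Disjoint U W := by
  have : Fact (ringChar K).Prime := ⟨CharP.char_is_prime K _⟩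
  have : NeZero d := ⟨by omega⟩
  let L := FiniteField.Extension K (ringChar K) d
  have := Fintype.ofFinite L
  have hL : finrank K L = d := FiniteField.finrank_extension K _ d
  obtain ⟨S, hS⟩ := exists_submodule_finrank_eq (K := K) (V := L) (hL ▸ hkd)
  have hSbot : S ≠ ⊥ := by
    rintro rfl
    rw [finrank_bot] at hS
    omega
  have : Module.Finite K V := Module.finite_of_finrank_pos (by omega)
  let e : (S × L) ≃ₗ[K] V := .ofFinrankEq _ _ (by rw [finrank_prod, hS, hL, hV])
  refine ⟨(Finset.univ.image (mulGraph S)).image (Submodule.map e.toLinearMap),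
    (LinearMap.range (LinearMap.inr K S L)).map e.toLinearMap, ?_, ?_, ?_, ?_⟩
  · refine (isPartialSpread_image (fun a => ?_) (pairwise_disjoint_mulGraph S) _).image_map
      e.injective
    rw [mulGraph, LinearMap.finrank_graph, hS]
  · rw [Finset.card_image_of_injective _ (Submodule.map_injective_of_injective e.injective),
      Finset.card_image_of_injective _ (injective_mulGraph S hSbot), Finset.card_univ,
      card_eq_pow_finrank (K := K) (V := L), hL]
  · rw [LinearEquiv.finrank_map_eq, LinearMap.finrank_range_of_inj LinearMap.inr_injective, hL]
  · simp only [Finset.mem_image, Finset.mem_univ, true_and]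
    rintro _ ⟨_, ⟨a, rfl⟩, rfl⟩
    exact Submodule.disjoint_map e.injective (LinearMap.disjoint_graph_range_inr _)

theorem exists_isPartialSpread_card_eq_multicomponentSize {K V : Type*} [Field K] [Fintype K]
    [AddCommGroup V] [Module K V] {k : ℕ} (hk : k ≠ 0) (hkV : k ≤ finrank K V) :
    ∃ C : Finset (Submodule K V),
      IsPartialSpread k C ∧ C.card = multicomponentSize (Fintype.card K) k (finrank K V) := by
  induction hm : finrank K V using Nat.strong_induction_on generalizing V with
  | _ m ih =>
  rcases lt_or_ge m (2 * k) with h | h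
  · obtain ⟨U, hU⟩ := exists_submodule_finrank_eq hkV
    exact ⟨{U}, .singleton hU, by rw [multicomponentSize_of_lt_two_mul h, Finset.card_singleton]⟩
  obtain ⟨C, W, hC, hCcard, hW, hCW⟩ :=
    exists_isPartialSpread_disjoint_of_finrank_eq_add (K := K) (V := V) (d := m - k) hk (by omega)
      (by omega)
  obtain ⟨D, hD, hDcard⟩ := ih (m - k) (by omega) (V := W) (by omega) hW
  let D' := D.image (Submodule.map W.subtype)
  have hCD' : ∀ U ∈ C, ∀ U' ∈ D', Disjoint U U' := by
    simp only [D', Finset.mem_image]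
    rintro U hU _ ⟨P, -, rfl⟩
    exact (hCW U hU).mono_right (Submodule.map_subtype_le W P)
  refine ⟨C ∪ D', hC.union (hD.image_map W.injective_subtype) hCD', ?_⟩
  rw [hC.card_union hk hCD', Finset.card_image_of_injective _
    (Submodule.map_injective_of_injective W.injective_subtype), hCcard, hDcard,
    multicomponentSize_eq_pow_add hk h]

theorem Acdc_multicomponent_lower_bound_general {K : Type*} [Field K] [Fintype K] {n k : ℕ}
    (hk1 : 1 ≤ k) (h2k : 2 * k < n) :
    (Fintype.card K ^ n - Fintype.card K ^ (k + n % k) + Fintype.card K ^ k - 1) /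
        (Fintype.card K ^ k - 1) ≤ Acdc K (Fin n → K) (2 * k) k ∧
    (Fintype.card K ^ n - Fintype.card K ^ (k + n % k) + Fintype.card K ^ k - 1) /
        (Fintype.card K ^ k - 1) =
      1 + ∑ i ∈ Finset.Icc 1 (n / k - 1), Fintype.card K ^ (n - i * k) := by
  have hk : k ≠ 0 := by omega
  have hsize := multicomponentSize_eq_div (Fintype.one_lt_card (α := K)) hk (m := n) (by omega)
  obtain ⟨C, hC, hcard⟩ := exists_isPartialSpread_card_eq_multicomponentSize (V := Fin n → K) hk
    (by rw [finrank_fin_fun]; omega)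
  rw [finrank_fin_fun] at hcard
  exact ⟨hsize ▸ hcard ▸ hC.card_le_Acdc, hsize⟩

/-- Multicomponent construction lower bound: for `n > 2k` and `k ∤ n`,
`A_q(n,2k;k) ≥ (q^n − q^{k+(n mod k)} + q^k − 1)/(q^k − 1)`, and this quantity equals
`1 + Σ_{i=1}^{⌊n/k⌋−1} q^{n−ik}`. -/
theorem Acdc_multicomponent_lower_bound {K : Type*} [Field K] [Fintype K] {n k : ℕ}
    (hk1 : 1 ≤ k) (h2k : 2 * k < n) (hnd : ¬ k ∣ n) :
    (Fintype.card K ^ n - Fintype.card K ^ (k + n % k) + Fintype.card K ^ k - 1) /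
        (Fintype.card K ^ k - 1) ≤ Acdc K (Fin n → K) (2 * k) k ∧
    (Fintype.card K ^ n - Fintype.card K ^ (k + n % k) + Fintype.card K ^ k - 1) /
        (Fintype.card K ^ k - 1) =
      1 + ∑ i ∈ Finset.Icc 1 (n / k - 1), Fintype.card K ^ (n - i * k) :=
  Acdc_multicomponent_lower_bound_general hk1 h2k
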